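/- arXiv:2408.04165 — 5 statements merged into one kernel-verified Lean document; each statement's English description precedes it below -/
import Mathlib

section
/- Let H be an ℓ-bounded family of sets on a ground set X with |H| > (r-1)^ℓ. If H contains no r-sunflower, then there exist distinct elements x, y ∈ X and sets S_x, S_y, S_xy ∈ H such that {x,y} ∩ S_x = {x}, {x,y} ∩ S_y = {y}, and {x,y} ∩ S_xy = {x,y}. -/
/-!
Suppose `H` has no pair pattern, i.e. no `x, y` separated by members of `H` in both directions but
lying in a common member. Then of any two elements of a member `S`, one lies in every member of
`H` containing the other, so `S` has a top element lying in every member of `H` that meets `S`.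
Take a maximal pairwise disjoint subfamily `D ⊆ H`; it is a sunflower, so `|D| ≤ r - 1`. Every
member of `H` lies in `D` or meets a member of `D`, hence contains the top of some member of `D`
(or is `∅ ∈ D`). The members containing a fixed element `m` correspond, by deleting `m`, to an
`(ℓ - 1)`-bounded family that again has neither an `r`-sunflower nor a pair pattern, so by
induction on `ℓ` there are at most `(r - 1)^(ℓ - 1)` of them, and `|H| ≤ (r - 1)^ℓ`.
-/

/-- A family of `r` distinct sets is an `r`-sunflower if all pairwise
intersections of distinct members coincide. -/
def IsSunflower {α : Type*} [DecidableEq α] (r : ℕ) (P : Finset (Finset α)) : Prop :=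
  P.card = r ∧ ∀ A ∈ P, ∀ B ∈ P, ∀ A' ∈ P, ∀ B' ∈ P,
    A ≠ B → A' ≠ B' → A ∩ B = A' ∩ B'

/-- `H` contains an `r`-sunflower. -/
def HasSunflower {α : Type*} [DecidableEq α] (H : Finset (Finset α)) (r : ℕ) : Prop :=
  ∃ P ⊆ H, IsSunflower r P

section

open Finset

variable {α : Type*} [DecidableEq α]

def HasPairPattern (H : Finset (Finset α)) : Prop :=
  ∃ x y, (∃ S ∈ H, x ∈ S ∧ y ∉ S) ∧ (∃ S ∈ H, y ∈ S ∧ x ∉ S) ∧ ∃ S ∈ H, x ∈ S ∧ y ∈ S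

theorem HasPairPattern.exists_pair_inter_eq {H : Finset (Finset α)} (h : HasPairPattern H) :
    ∃ x y : α, x ≠ y ∧ ∃ Sx ∈ H, ∃ Sy ∈ H, ∃ Sxy ∈ H,
      ({x, y} : Finset α) ∩ Sx = {x} ∧
      ({x, y} : Finset α) ∩ Sy = {y} ∧
      ({x, y} : Finset α) ∩ Sxy = {x, y} := by
  obtain ⟨x, y, ⟨Sx, hSx, hxSx, hySx⟩, ⟨Sy, hSy, hySy, hxSy⟩, Sxy, hSxy, hxSxy, hySxy⟩ := h
  refine ⟨x, y, fun hxy => hySx (hxy ▸ hxSx), Sx, hSx, Sy, hSy, Sxy, hSxy, ?_, ?_, ?_⟩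
  · rw [insert_inter_of_mem hxSx, singleton_inter_of_notMem hySx, insert_empty]
  · rw [insert_inter_of_notMem hxSy, singleton_inter_of_mem hySy]
  · exact inter_eq_left.2 (insert_subset hxSxy (singleton_subset_iff.2 hySxy))

/-- The top element is one of `S` lying in the most members of `H`: if it missed a member `T`
meeting `S` in `u`, the sets containing it could not all contain `u` either, a pair pattern. -/
theorem exists_mem_forall_mem_of_not_disjoint {H : Finset (Finset α)} (hpat : ¬HasPairPattern H)
    {S : Finset α} (hS : S ∈ H) (hne : S.Nonempty) :
    ∃ m ∈ S, ∀ T ∈ H, ¬Disjoint S T → m ∈ T := by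
  obtain ⟨m, hmS, hmax⟩ := exists_max_image S (fun u => #{T ∈ H | u ∈ T}) hne
  refine ⟨m, hmS, fun T hT hST => ?_⟩
  obtain ⟨u, huS, huT⟩ := not_disjoint_iff.1 hST
  by_contra hmT
  have hnsub : ¬{T ∈ H | m ∈ T} ⊆ {T ∈ H | u ∈ T} := fun hsub => by
    have hTu : T ∈ {T ∈ H | u ∈ T} := mem_filter.2 ⟨hT, huT⟩
    rw [← eq_of_subset_of_card_le hsub (hmax u huS), mem_filter] at hTu
    exact hmT hTu.2
  obtain ⟨T', hT'm, hT'u⟩ := not_subset.1 hnsub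
  rw [mem_filter] at hT'm
  exact hpat ⟨u, m, ⟨T, hT, huT, hmT⟩,
    ⟨T', hT'm.1, hT'm.2, fun h => hT'u (mem_filter.2 ⟨hT'm.1, h⟩)⟩, S, hS, huS, hmS⟩

theorem exists_pairwiseDisjoint_subset_forall_not_disjoint (H : Finset (Finset α)) :
    ∃ D ⊆ H, (D : Set (Finset α)).PairwiseDisjoint id ∧
      ∀ T ∈ H, T ∈ D ∨ ∃ S ∈ D, ¬Disjoint S T := by
  classical
  obtain ⟨D, hD⟩ := exists_maximal
    (s := H.powerset.filter fun D : Finset (Finset α) => (D : Set (Finset α)).PairwiseDisjoint id)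
    ⟨∅, by simp⟩
  obtain ⟨hDH, hDdisj⟩ := by simpa only [mem_filter, mem_powerset] using hD.1
  refine ⟨D, hDH, hDdisj, fun T hT => or_iff_not_imp_right.2 fun hmeet => ?_⟩
  simp only [not_exists, not_and, not_not] at hmeet
  have hins : insert T D ∈
      H.powerset.filter fun D : Finset (Finset α) => (D : Set (Finset α)).PairwiseDisjoint id := by
    refine mem_filter.2 ⟨mem_powerset.2 (insert_subset hT hDH), ?_⟩
    rw [coe_insert]
    exact hDdisj.insert fun S hS _ => (hmeet S hS).symm
  exact hD.2 hins (subset_insert T D) (mem_insert_self T D)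

theorem hasSunflower_of_pairwiseDisjoint {H D : Finset (Finset α)} {r : ℕ} (hDH : D ⊆ H)
    (hD : (D : Set (Finset α)).PairwiseDisjoint id) (hr : r ≤ #D) : HasSunflower H r := by
  obtain ⟨P, hPD, hP⟩ := exists_subset_card_eq hr
  refine ⟨P, hPD.trans hDH, hP, fun A hA B hB A' hA' B' hB' hAB hAB' => ?_⟩
  have hAB : Disjoint A B := hD (hPD hA) (hPD hB) hAB
  have hAB' : Disjoint A' B' := hD (hPD hA') (hPD hB') hAB'
  rw [disjoint_iff_inter_eq_empty.1 hAB, disjoint_iff_inter_eq_empty.1 hAB']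

theorem hasSunflower_of_le_one {H : Finset (Finset α)} {r : ℕ} (hH : H.Nonempty) (hr : r ≤ 1) :
    HasSunflower H r := by
  obtain ⟨P, hPH, hP⟩ := exists_subset_card_eq (hr.trans (one_le_card.2 hH))
  exact ⟨P, hPH, hP, fun A hA B hB _ _ _ _ hAB _ =>
    absurd (card_le_one.1 (hP ▸ hr) A hA B hB) hAB⟩

theorem card_memberSubfamily (H : Finset (Finset α)) (m : α) :
    #(H.memberSubfamily m) = #{T ∈ H | m ∈ T} :=
  card_image_of_injOn ((erase_injOn' m).mono fun _ hT => (mem_filter.1 hT).2)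

theorem HasSunflower.of_memberSubfamily {H : Finset (Finset α)} {m : α} {r : ℕ}
    (h : HasSunflower (H.memberSubfamily m) r) : HasSunflower H r := by
  obtain ⟨P, hPH, hPcard, hP⟩ := h
  have hm : ∀ A ∈ P, m ∉ A := fun A hA => (mem_memberSubfamily.1 (hPH hA)).2
  have hinj : Set.InjOn (insert m : Finset α → Finset α) P := fun A hA B hB hAB => by
    rw [← erase_insert (hm A hA), ← erase_insert (hm B hB), hAB]
  refine ⟨P.image (insert m), ?_, by rw [card_image_of_injOn hinj, hPcard], ?_⟩
  · exact image_subset_iff.2 fun A hA => (mem_memberSubfamily.1 (hPH hA)).1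
  · simp only [mem_image, forall_exists_index, and_imp, forall_apply_eq_imp_iff₂]
    intro A hA B hB A' hA' B' hB' hAB hAB'
    rw [← insert_inter_distrib, ← insert_inter_distrib,
      hP A hA B hB A' hA' B' hB' (ne_of_apply_ne _ hAB) (ne_of_apply_ne _ hAB')]

theorem HasPairPattern.of_memberSubfamily {H : Finset (Finset α)} {m : α}
    (h : HasPairPattern (H.memberSubfamily m)) : HasPairPattern H := by
  obtain ⟨x, y, ⟨Sx, hSx, hxSx, hySx⟩, ⟨Sy, hSy, hySy, hxSy⟩, Sxy, hSxy, hxSxy, hySxy⟩ := h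
  rw [mem_memberSubfamily] at hSx hSy hSxy
  have hxm : x ≠ m := fun h => hSx.2 (h ▸ hxSx)
  have hym : y ≠ m := fun h => hSy.2 (h ▸ hySy)
  exact ⟨x, y, ⟨_, hSx.1, mem_insert_of_mem hxSx, by simp [hym, hySx]⟩,
    ⟨_, hSy.1, mem_insert_of_mem hySy, by simp [hxm, hxSy]⟩,
    _, hSxy.1, mem_insert_of_mem hxSxy, mem_insert_of_mem hySxy⟩

theorem card_le_card_mul_of_forall_not_disjoint {H D : Finset (Finset α)} {k : ℕ}
    (hpat : ¬HasPairPattern H) (hDH : D ⊆ H) (hcover : ∀ T ∈ H, T ∈ D ∨ ∃ S ∈ D, ¬Disjoint S T)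
    (hk : ∀ m, #{T ∈ H | m ∈ T} ≤ k) (hk₁ : 1 ≤ k) : #H ≤ #D * k := by
  have hpiece : ∀ S ∈ D, #{T ∈ H | T = S ∨ ¬Disjoint S T} ≤ k := by
    intro S hSD
    rcases S.eq_empty_or_nonempty with rfl | hne
    · refine (card_le_one.2 fun A hA B hB => ?_).trans hk₁
      simp only [mem_filter, disjoint_empty_left, not_true_eq_false, or_false] at hA hB
      rw [hA.2, hB.2]
    · obtain ⟨m, hmS, hm⟩ := exists_mem_forall_mem_of_not_disjoint hpat (hDH hSD) hne
      refine (card_le_card fun T hT => ?_).trans (hk m)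
      obtain ⟨hTH, rfl | hST⟩ := mem_filter.1 hT
      exacts [mem_filter.2 ⟨hTH, hmS⟩, mem_filter.2 ⟨hTH, hm T hTH hST⟩]
  calc #H ≤ #(D.biUnion fun S => {T ∈ H | T = S ∨ ¬Disjoint S T}) := by
        refine card_le_card fun T hT => mem_biUnion.2 ?_
        rcases hcover T hT with hTD | ⟨S, hSD, hST⟩
        exacts [⟨T, hTD, mem_filter.2 ⟨hT, Or.inl rfl⟩⟩, ⟨S, hSD, mem_filter.2 ⟨hT, Or.inr hST⟩⟩]
    _ ≤ ∑ S ∈ D, #{T ∈ H | T = S ∨ ¬Disjoint S T} := card_biUnion_le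
    _ ≤ ∑ _S ∈ D, k := sum_le_sum hpiece
    _ = #D * k := by rw [sum_const, smul_eq_mul]

theorem card_le_pow_of_not_hasSunflower_of_not_hasPairPattern {H : Finset (Finset α)} {ℓ r : ℕ}
    (hb : ∀ S ∈ H, #S ≤ ℓ) (hno : ¬HasSunflower H r) (hpat : ¬HasPairPattern H) :
    #H ≤ (r - 1) ^ ℓ := by
  induction ℓ generalizing H with
  | zero =>
    calc #H ≤ #({∅} : Finset (Finset α)) :=
          card_le_card fun S hS => mem_singleton.2 (card_eq_zero.1 (Nat.le_zero.1 (hb S hS)))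
      _ = (r - 1) ^ 0 := by simp
  | succ ℓ ih =>
    rcases H.eq_empty_or_nonempty with rfl | hH
    · simp
    have hr : 2 ≤ r := by
      by_contra hr
      exact hno (hasSunflower_of_le_one hH (by omega))
    obtain ⟨D, hDH, hDdisj, hcover⟩ := exists_pairwiseDisjoint_subset_forall_not_disjoint H
    have hD : #D ≤ r - 1 := by
      by_contra hD
      exact hno (hasSunflower_of_pairwiseDisjoint hDH hDdisj (by omega))
    have hlink : ∀ m, #{T ∈ H | m ∈ T} ≤ (r - 1) ^ ℓ := fun m => by
      rw [← card_memberSubfamily]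
      refine ih (fun S hS => ?_) (fun h => hno h.of_memberSubfamily)
        (fun h => hpat h.of_memberSubfamily)
      have hS' := hb _ (mem_memberSubfamily.1 hS).1
      rwa [card_insert_of_notMem (mem_memberSubfamily.1 hS).2, Nat.add_le_add_iff_right] at hS'
    calc #H ≤ #D * (r - 1) ^ ℓ := card_le_card_mul_of_forall_not_disjoint hpat hDH hcover hlink
          (Nat.one_le_pow _ _ (by omega))
      _ ≤ (r - 1) * (r - 1) ^ ℓ := Nat.mul_le_mul_right _ hD
      _ = (r - 1) ^ (ℓ + 1) := (pow_succ' _ _).symm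

end

/-- Let `H` be an `ℓ`-bounded family of sets with `|H| > (r-1)^ℓ`. If `H` contains
no `r`-sunflower, then there are distinct elements `x, y` and sets
`Sx, Sy, Sxy ∈ H` with `{x,y} ∩ Sx = {x}`, `{x,y} ∩ Sy = {y}`, `{x,y} ∩ Sxy = {x,y}`. -/
theorem stmt2 {α : Type*} [DecidableEq α] (H : Finset (Finset α)) (ℓ r : ℕ)
    (hb : ∀ S ∈ H, S.card ≤ ℓ) (hcard : (r - 1) ^ ℓ < H.card)
    (hno : ¬ HasSunflower H r) :
    ∃ x y : α, x ≠ y ∧ ∃ Sx ∈ H, ∃ Sy ∈ H, ∃ Sxy ∈ H,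
      ({x, y} : Finset α) ∩ Sx = {x} ∧
      ({x, y} : Finset α) ∩ Sy = {y} ∧
      ({x, y} : Finset α) ∩ Sxy = {x, y} := by
  by_contra hcon
  exact hcard.not_ge (card_le_pow_of_not_hasSunflower_of_not_hasPairPattern hb hno
    fun h => hcon h.exists_pair_inter_eq)
end

section
/- The family H of edge sets of leaf-to-root paths in a rooted complete (r-1)-ary tree of depth ℓ is an ℓ-bounded family of size (r-1)^ℓ with VC-dimension at most 1 that contains no r-sunflower. -/
/-- `H` shatters `T` if every subset of `T` is the trace of a member of `H`. -/
def Shatters {α : Type*} [DecidableEq α] (H : Finset (Finset α)) (T : Finset α) : Prop :=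
  ∀ A ⊆ T, ∃ S ∈ H, T ∩ S = A

/-- The VC-dimension of `H` is at most `d`. -/
def VCdimLE {α : Type*} [DecidableEq α] (H : Finset (Finset α)) (d : ℕ) : Prop :=
  ∀ T : Finset α, Shatters H T → T.card ≤ d

/-- In the rooted complete `(r-1)`-ary tree of depth `ℓ`, a leaf is a function
`Fin ℓ → Fin (r-1)`, an edge is identified with the (nonempty) prefix of choices
leading to its lower endpoint, and the edge set of the leaf-to-root path of a
leaf `f` consists of the prefixes of `f` of lengths `1, …, ℓ`. -/
def pathEdges (r ℓ : ℕ) (f : Fin ℓ → Fin (r - 1)) : Finset (List (Fin (r - 1))) :=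
  (Finset.range ℓ).image fun i => (List.ofFn f).take (i + 1)

/-!
The edges of the tree are the nonempty words over `Fin (r - 1)`, and the path of a leaf consists
of the nonempty prefixes of its word. Two edges on a common path are nested, and every path
through the lower one also passes through the upper one; hence no two edges are shattered.
Two distinct paths share exactly the edges above the vertex at which they branch, so in an
`r`-sunflower with kernel of size `k` all paths branch at depth `k` from a common vertex and
leave it through pairwise distinct children, of which there are only `r - 1`.
-/

open List

section NonemptyPrefixes

variable {α : Type*} [DecidableEq α]

def nonemptyPrefixes (L : List α) : Finset (List α) :=
  (Finset.range L.length).image fun i => L.take (i + 1)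

theorem mem_nonemptyPrefixes {L x : List α} : x ∈ nonemptyPrefixes L ↔ x ≠ [] ∧ x <+: L := by
  simp only [nonemptyPrefixes, Finset.mem_image, Finset.mem_range]
  constructor
  · rintro ⟨i, hi, rfl⟩
    exact ⟨ne_nil_of_length_pos (by simp; omega), take_prefix _ _⟩
  · rintro ⟨hx, hxL⟩
    have hlen := hxL.length_le
    have hpos := length_pos_iff.mpr hx
    refine ⟨x.length - 1, by omega, ?_⟩
    rw [Nat.sub_add_cancel hpos, ← prefix_iff_eq_take.mp hxL]

theorem card_nonemptyPrefixes (L : List α) : (nonemptyPrefixes L).card = L.length := by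
  rw [nonemptyPrefixes, Finset.card_image_of_injOn, Finset.card_range]
  intro i hi j hj hij
  simp only [Finset.coe_range, Set.mem_Iio] at hi hj
  have := congrArg length hij
  simp only [length_take] at this
  omega

end NonemptyPrefixes

section Words

variable {α : Type*} {ℓ : ℕ}

theorem prefix_ofFn_and_prefix_ofFn_iff {f g : Fin ℓ → α} {d : Fin ℓ} (hd : f d ≠ g d)
    (hlt : ∀ i < d, f i = g i) {x : List α} :
    x <+: ofFn f ∧ x <+: ofFn g ↔ x <+: (ofFn f).take d := by
  rw [prefix_take_iff]
  constructor
  · rintro ⟨hf, hg⟩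
    refine ⟨hf, not_lt.mp fun hdx => hd ?_⟩
    have := (hf.getElem hdx).symm.trans (hg.getElem hdx)
    simpa using this
  · rintro ⟨hf, hdx⟩
    refine ⟨hf, prefix_iff_getElem.mpr ⟨by simpa using hf.length_le, fun i hi => ?_⟩⟩
    rw [hf.getElem hi]
    have hiℓ : i < ℓ := by simpa using hf.length_le.trans_lt' hi
    simpa using hlt ⟨i, hiℓ⟩ (Fin.lt_def.mpr (by simp; omega))

theorem exists_first_ne {f g : Fin ℓ → α} (h : f ≠ g) :
    ∃ d : Fin ℓ, f d ≠ g d ∧ ∀ i < d, f i = g i := by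
  obtain ⟨d, hd, hmin⟩ := wellFounded_lt.has_min {i | f i ≠ g i} (Function.ne_iff.mp h)
  exact ⟨d, hd, fun i hi => not_not.mp fun hne => hmin i hne hi⟩

end Words

section VCDimension

variable {α : Type*} [DecidableEq α]

theorem vcdimLE_one_of_comparable {H : Finset (Finset α)}
    (h : ∀ S ∈ H, ∀ a ∈ S, ∀ b ∈ S,
      (∀ S' ∈ H, b ∈ S' → a ∈ S') ∨ (∀ S' ∈ H, a ∈ S' → b ∈ S')) :
    VCdimLE H 1 := by
  intro T hT
  by_contra! hcard
  obtain ⟨a, ha, b, hb, hab⟩ := Finset.one_lt_card.mp hcard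
  have separates : ∀ {a b}, a ∈ T → b ∈ T → a ≠ b → ∃ S' ∈ H, b ∈ S' ∧ a ∉ S' := by
    intro a b ha hb hab
    obtain ⟨S', hS', hTS'⟩ := hT {b} (by simpa using hb)
    refine ⟨S', hS', (Finset.mem_inter.mp (hTS' ▸ Finset.mem_singleton_self b)).2, fun haS' => ?_⟩
    have : a ∈ T ∩ S' := Finset.mem_inter.mpr ⟨ha, haS'⟩
    exact hab (by simpa [hTS'] using this)
  obtain ⟨S, hS, hTS⟩ := hT {a, b} (Finset.insert_subset ha (by simpa using hb))
  have hmem : ∀ x ∈ ({a, b} : Finset α), x ∈ S := fun x hx =>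
    (Finset.mem_inter.mp (hTS ▸ hx : x ∈ T ∩ S)).2
  rcases h S hS a (hmem a (by simp)) b (hmem b (by simp)) with a_below_b | b_below_a
  · obtain ⟨S', hS', hbS', haS'⟩ := separates ha hb hab
    exact haS' (a_below_b S' hS' hbS')
  · obtain ⟨S', hS', haS', hbS'⟩ := separates hb ha (Ne.symm hab)
    exact hbS' (b_below_a S' hS' haS')

end VCDimension

section PathEdges

variable {r ℓ : ℕ}

theorem pathEdges_eq_nonemptyPrefixes (f : Fin ℓ → Fin (r - 1)) :
    pathEdges r ℓ f = nonemptyPrefixes (ofFn f) := by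
  simp [pathEdges, nonemptyPrefixes]

theorem mem_pathEdges {f : Fin ℓ → Fin (r - 1)} {x : List (Fin (r - 1))} :
    x ∈ pathEdges r ℓ f ↔ x ≠ [] ∧ x <+: ofFn f := by
  rw [pathEdges_eq_nonemptyPrefixes, mem_nonemptyPrefixes]

theorem card_pathEdges (f : Fin ℓ → Fin (r - 1)) : (pathEdges r ℓ f).card = ℓ := by
  rw [pathEdges_eq_nonemptyPrefixes, card_nonemptyPrefixes, length_ofFn]

theorem pathEdges_injective : Function.Injective (pathEdges r ℓ) := by
  intro f g h
  rcases Nat.eq_zero_or_pos ℓ with rfl | hℓ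
  · exact Subsingleton.elim f g
  · have : ofFn f ∈ pathEdges r ℓ g := h ▸ mem_pathEdges.mpr ⟨by simp; omega, prefix_refl _⟩
    exact ofFn_inj.mp ((mem_pathEdges.mp this).2.eq_of_length (by simp))

/-- Two distinct leaves share exactly `k` edges, where `k` is the depth at which they branch. -/
theorem exists_apply_card_inter_pathEdges_ne {f g : Fin ℓ → Fin (r - 1)} (h : f ≠ g) :
    ∃ hk : (pathEdges r ℓ f ∩ pathEdges r ℓ g).card < ℓ,
      f ⟨_, hk⟩ ≠ g ⟨_, hk⟩ := by
  obtain ⟨d, hd, hlt⟩ := exists_first_ne h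
  have hinter : pathEdges r ℓ f ∩ pathEdges r ℓ g = nonemptyPrefixes ((ofFn f).take d) := by
    ext x
    simp only [Finset.mem_inter, mem_pathEdges, mem_nonemptyPrefixes,
      ← prefix_ofFn_and_prefix_ofFn_iff hd hlt]
    tauto
  have hcard : (pathEdges r ℓ f ∩ pathEdges r ℓ g).card = d := by
    rw [hinter, card_nonemptyPrefixes, length_take, length_ofFn]
    exact min_eq_left d.2.le
  exact ⟨hcard ▸ d.2, by simpa [hcard] using hd⟩

theorem vcdimLE_pathEdges : VCdimLE (Finset.univ.image (pathEdges r ℓ)) 1 := by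
  refine vcdimLE_one_of_comparable ?_
  simp only [Finset.mem_image, Finset.mem_univ, true_and, forall_exists_index,
    forall_apply_eq_imp_iff]
  intro f a ha b hb
  rw [mem_pathEdges] at ha hb
  have below : ∀ {a b : List (Fin (r - 1))}, a ≠ [] → a <+: b →
      ∀ g, b ∈ pathEdges r ℓ g → a ∈ pathEdges r ℓ g := fun ha hab g hb =>
    mem_pathEdges.mpr ⟨ha, hab.trans (mem_pathEdges.mp hb).2⟩
  rcases prefix_or_prefix_of_prefix ha.2 hb.2 with hab | hba
  · exact Or.inl (below ha.1 hab)
  · exact Or.inr (below hb.1 hba)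

theorem not_hasSunflower_pathEdges (hr : 2 ≤ r) :
    ¬ HasSunflower (Finset.univ.image (pathEdges r ℓ)) r := by
  rintro ⟨P, hPH, hPcard, hsun⟩
  obtain ⟨Q, -, rfl⟩ := Finset.subset_image_iff.mp hPH
  rw [Finset.card_image_of_injective _ pathEdges_injective] at hPcard
  obtain ⟨f₀, hf₀, g₀, hg₀, hfg₀⟩ := Finset.one_lt_card.mp (by omega : 1 < Q.card)
  obtain ⟨hk, -⟩ := exists_apply_card_inter_pathEdges_ne hfg₀
  have hbranch : Set.InjOn (fun f => f ⟨_, hk⟩) (Q : Set (Fin ℓ → Fin (r - 1))) := by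
    intro f hf g hg hfg
    by_contra hne
    have hkernel : pathEdges r ℓ f ∩ pathEdges r ℓ g = pathEdges r ℓ f₀ ∩ pathEdges r ℓ g₀ :=
      hsun _ (Finset.mem_image_of_mem _ hf) _ (Finset.mem_image_of_mem _ hg)
        _ (Finset.mem_image_of_mem _ hf₀) _ (Finset.mem_image_of_mem _ hg₀)
        (pathEdges_injective.ne hne) (pathEdges_injective.ne hfg₀)
    obtain ⟨_, hbr⟩ := exists_apply_card_inter_pathEdges_ne hne
    simp only [hkernel] at hbr
    exact hbr hfg
  have := Finset.card_le_card_of_injOn _ (fun _ _ => Finset.mem_univ _) hbranch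
  simp only [Finset.card_univ, Fintype.card_fin] at this
  omega

end PathEdges

/-- The family of edge sets of leaf-to-root paths in a rooted complete `(r-1)`-ary
tree of depth `ℓ` is an `ℓ`-bounded family of size `(r-1)^ℓ` with VC-dimension at
most 1 that contains no `r`-sunflower. -/
theorem stmt4 (r ℓ : ℕ) (hr : 2 ≤ r) :
    (∀ S ∈ Finset.univ.image (pathEdges r ℓ), S.card ≤ ℓ) ∧
    (Finset.univ.image (pathEdges r ℓ)).card = (r - 1) ^ ℓ ∧
    VCdimLE (Finset.univ.image (pathEdges r ℓ)) 1 ∧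
    ¬ HasSunflower (Finset.univ.image (pathEdges r ℓ)) r := by
  refine ⟨?_, ?_, vcdimLE_pathEdges, not_hasSunflower_pathEdges hr⟩
  · simp only [Finset.mem_image, Finset.mem_univ, true_and, forall_exists_index,
      forall_apply_eq_imp_iff]
    exact fun f => (card_pathEdges f).le
  · rw [Finset.card_image_of_injective _ pathEdges_injective, Finset.card_univ,
      Fintype.card_fun, Fintype.card_fin, Fintype.card_fin]
end

section
/- Suppose H is a set system on X with VC(H) ≤ 1 such that for every pair of elements x, y ∈ X there is some S ∈ H with S ∩ {x,y} = ∅. Let Z ⊆ X contain some member of H, let core(Z) be the intersection of all S ∈ H contained in Z. Then the sets of the form S ∩ core(Z) with S ∈ H all of a fixed cardinality k are unique; that is, if S, S' ∈ H and |S ∩ core(Z)| = |S' ∩ core(Z)| = k, then S ∩ core(Z) = S' ∩ core(Z). -/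
/-- The `H`-core of `Z`: the intersection of all members of `H` contained in `Z`. -/
def hCore {α : Type*} [DecidableEq α] (H : Finset (Finset α)) (Z : Finset α) :
    Finset α :=
  Z.filter fun a => ∀ S ∈ H, S ⊆ Z → a ∈ S

/-- Suppose `VC(H) ≤ 1` and for every pair `x, y` some `S ∈ H` avoids `{x,y}`.
If `Z` contains a member of `H`, then sets of the form `S ∩ core(Z)` of a fixed
cardinality are unique. -/
theorem stmt9 {α : Type*} [DecidableEq α] (H : Finset (Finset α))
    (hVC : VCdimLE H 1)
    (havoid : ∀ x y : α, ∃ S ∈ H, S ∩ ({x, y} : Finset α) = ∅)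
    (Z : Finset α) (hZ : ∃ S ∈ H, S ⊆ Z) :
    ∀ S ∈ H, ∀ S' ∈ H,
      (S ∩ hCore H Z).card = (S' ∩ hCore H Z).card →
      S ∩ hCore H Z = S' ∩ hCore H Z := by
  obtain ⟨S₀, hS₀H, hS₀Z⟩ := hZ
  -- any two traces are comparable
  have key : ∀ S ∈ H, ∀ S' ∈ H,
      S ∩ hCore H Z ⊆ S' ∩ hCore H Z ∨ S' ∩ hCore H Z ⊆ S ∩ hCore H Z := by
    intro A hA B hB
    by_contra hcon
    push_neg at hcon
    obtain ⟨h1, h2⟩ := hcon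
    obtain ⟨x, hxA, hxB⟩ := Finset.not_subset.mp h1
    obtain ⟨y, hyB, hyA⟩ := Finset.not_subset.mp h2
    rw [Finset.mem_inter] at hxA hyB
    have hxC : x ∈ hCore H Z := hxA.2
    have hyC : y ∈ hCore H Z := hyB.2
    have hxB' : x ∉ B := fun h => hxB (Finset.mem_inter.mpr ⟨h, hxC⟩)
    have hyA' : y ∉ A := fun h => hyA (Finset.mem_inter.mpr ⟨h, hyC⟩)
    have hxS₀ : x ∈ S₀ := by
      rw [hCore, Finset.mem_filter] at hxC
      exact hxC.2 S₀ hS₀H hS₀Z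
    have hyS₀ : y ∈ S₀ := by
      rw [hCore, Finset.mem_filter] at hyC
      exact hyC.2 S₀ hS₀H hS₀Z
    have hne : x ≠ y := fun h => hyA' (h ▸ hxA.1)
    have hshat : Shatters H ({x, y} : Finset α) := by
      intro A' hA'
      by_cases hx : x ∈ A' <;> by_cases hy : y ∈ A'
      · refine ⟨S₀, hS₀H, ?_⟩
        ext a
        simp only [Finset.mem_inter, Finset.mem_insert, Finset.mem_singleton]
        constructor
        · rintro ⟨h | h, _⟩ <;> [exact h ▸ hx; exact h ▸ hy]
        · intro ha
          rcases Finset.mem_insert.mp (hA' ha) with h | h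
          · exact ⟨Or.inl h, h ▸ hxS₀⟩
          · exact ⟨Or.inr (Finset.mem_singleton.mp h), (Finset.mem_singleton.mp h) ▸ hyS₀⟩
      · refine ⟨A, hA, ?_⟩
        ext a
        simp only [Finset.mem_inter, Finset.mem_insert, Finset.mem_singleton]
        constructor
        · rintro ⟨h | h, haA⟩
          · exact h ▸ hx
          · exact absurd (h ▸ haA) hyA'
        · intro ha
          rcases Finset.mem_insert.mp (hA' ha) with h | h
          · exact ⟨Or.inl h, h ▸ hxA.1⟩
          · exact absurd ((Finset.mem_singleton.mp h) ▸ ha) hy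
      · refine ⟨B, hB, ?_⟩
        ext a
        simp only [Finset.mem_inter, Finset.mem_insert, Finset.mem_singleton]
        constructor
        · rintro ⟨h | h, haB⟩
          · exact absurd (h ▸ haB) hxB'
          · exact h ▸ hy
        · intro ha
          rcases Finset.mem_insert.mp (hA' ha) with h | h
          · exact absurd (h ▸ ha) hx
          · exact ⟨Or.inr (Finset.mem_singleton.mp h), (Finset.mem_singleton.mp h) ▸ hyB.1⟩
      · obtain ⟨S'', hS''H, hS''⟩ := havoid x y
        refine ⟨S'', hS''H, ?_⟩
        have hempty : ({x, y} : Finset α) ∩ S'' = ∅ := by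
          rwa [Finset.inter_comm] at hS''
        rw [hempty]
        symm
        rw [Finset.eq_empty_iff_forall_notMem]
        intro a ha
        rcases Finset.mem_insert.mp (hA' ha) with h | h
        · exact hx (h ▸ ha)
        · exact hy ((Finset.mem_singleton.mp h) ▸ ha)
    have := hVC _ hshat
    rw [Finset.card_insert_of_notMem (by simp [hne]), Finset.card_singleton] at this
    omega
  intro S hS S' hS' hcard
  rcases key S hS S' hS' with h | h
  · exact Finset.eq_of_subset_of_card_le h hcard.ge
  · exact (Finset.eq_of_subset_of_card_le h hcard.le).symm
end

section
/- For real x > 8, log*(x²) + 1/2 ≤ log*(2^x), where log* denotes the modified iterated binary logarithm taking half-integer values: log* ℓ = t on the interval (tower(t-1), tower'(t)] and log* ℓ = t + 1/2 on (tower'(t), tower(t)], where tower(t) is the tower of 2s of height t and tower'(t) is the tower of height t with the topmost 2 replaced by 3. -/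
open Filter Set

/-!
Interleave the towers and their splitting points into one sequence of breakpoints
`b = tower 0, split 1, tower 1, split 2, …`, so that `log*` equals `(k + 2) / 2` on
`(b k, b (k + 1)]`. For `k ≥ 2` we have `b (k + 2) = 2 ^ b k`, which propagates
`2 * b k ≤ b (k + 1)` from `k = 4` on, hence `b (k + 1) ^ 2 ≤ b (k + 2)` for `k ≥ 5`.
So if `x ∈ (b k, b (k + 1)]` with `k ≥ 5` (i.e. `x > b 5 = 8`), then `2 ^ x` lies one full step
higher, in `(b (k + 2), b (k + 3)]`, while `x ^ 2` lies at most half a step higher, in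
`(b k, b (k + 2)]`.
-/

lemma exists_mem_Ioc_of_tendsto_atTop {α : Type*} [LinearOrder α] {b : ℕ → α}
    (hb : Tendsto b atTop atTop) {n : ℕ} {x : α} (hx : b n < x) :
    ∃ k ≥ n, x ∈ Ioc (b k) (b (k + 1)) := by
  classical
  have hex : ∃ m, x ≤ b (n + m + 1) := by
    obtain ⟨N, hN⟩ := eventually_atTop.1 (hb.eventually_ge_atTop x)
    exact ⟨N, hN _ (by omega)⟩
  refine ⟨n + Nat.find hex, Nat.le_add_right _ _, ?_, Nat.find_spec hex⟩
  rcases Nat.eq_zero_or_pos (Nat.find hex) with h0 | hpos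
  · simpa [h0] using hx
  · have := Nat.find_min hex (Nat.sub_one_lt_of_lt hpos)
    rw [not_le, show n + (Nat.find hex - 1) + 1 = n + Nat.find hex by omega] at this
    exact this

structure IsTowerSplit (tower split : ℕ → ℕ) : Prop where
  tower_zero : tower 0 = 1
  tower_succ : ∀ t, tower (t + 1) = 2 ^ tower t
  split_two : split 2 = 3
  split_succ : ∀ t, 2 ≤ t → split (t + 1) = 2 ^ split t

def breakpoint (tower split : ℕ → ℕ) (k : ℕ) : ℕ :=
  if Even k then tower (k / 2) else split (k / 2 + 1)

section Breakpoint

variable {tower split : ℕ → ℕ}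

@[simp]
lemma breakpoint_two_mul (t : ℕ) : breakpoint tower split (2 * t) = tower t := by
  simp [breakpoint]

@[simp]
lemma breakpoint_two_mul_add_one (t : ℕ) :
    breakpoint tower split (2 * t + 1) = split (t + 1) := by
  simp [breakpoint, Nat.mul_add_div]

namespace IsTowerSplit

lemma breakpoint_add_two (h : IsTowerSplit tower split) {k : ℕ} (hk : 2 ≤ k) :
    breakpoint tower split (k + 2) = 2 ^ breakpoint tower split k := by
  obtain ⟨t, rfl | rfl⟩ := Nat.even_or_odd' k
  · rw [show 2 * t + 2 = 2 * (t + 1) by ring, breakpoint_two_mul, breakpoint_two_mul,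
      h.tower_succ]
  · rw [show 2 * t + 1 + 2 = 2 * (t + 1) + 1 by ring, breakpoint_two_mul_add_one,
      breakpoint_two_mul_add_one, h.split_succ (t + 1) (by omega)]


lemma breakpoint_four (h : IsTowerSplit tower split) : breakpoint tower split 4 = 4 := by
  rw [h.breakpoint_add_two le_rfl, show 2 = 2 * 1 by rfl, breakpoint_two_mul, h.tower_succ,
    h.tower_zero]
  norm_num

lemma breakpoint_five (h : IsTowerSplit tower split) : breakpoint tower split 5 = 8 := by
  rw [h.breakpoint_add_two (by norm_num), show 3 = 2 * 1 + 1 by rfl,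
    breakpoint_two_mul_add_one, h.split_two]
  norm_num

lemma breakpoint_six (h : IsTowerSplit tower split) : breakpoint tower split 6 = 16 := by
  rw [h.breakpoint_add_two (by norm_num), h.breakpoint_four]
  norm_num

lemma one_le_breakpoint (h : IsTowerSplit tower split) {k : ℕ} (hk : 4 ≤ k) :
    1 ≤ breakpoint tower split k := by
  obtain ⟨j, rfl⟩ := Nat.exists_eq_add_of_le' hk
  rw [show j + 4 = j + 2 + 2 by ring, h.breakpoint_add_two (by omega)]
  exact Nat.one_le_two_pow

lemma two_mul_breakpoint_le (h : IsTowerSplit tower split) {k : ℕ} (hk : 4 ≤ k) :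
    2 * breakpoint tower split k ≤ breakpoint tower split (k + 1) := by
  -- `b (k + 2) = 2 ^ b k` links `k` to `k + 2`, so induct on consecutive pairs.
  suffices ∀ k, 4 ≤ k → 2 * breakpoint tower split k ≤ breakpoint tower split (k + 1) ∧
      2 * breakpoint tower split (k + 1) ≤ breakpoint tower split (k + 2) from (this k hk).1
  intro k hk
  induction k, hk using Nat.le_induction with
  | base => simp [h.breakpoint_four, h.breakpoint_five, h.breakpoint_six]
  | succ k hk ih =>
    refine ⟨ih.2, ?_⟩
    have hpos := h.one_le_breakpoint hk
    rw [h.breakpoint_add_two (by omega), h.breakpoint_add_two (by omega), ← pow_succ']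
    exact Nat.pow_le_pow_right two_pos (by omega)

lemma sq_breakpoint_succ_le (h : IsTowerSplit tower split) {k : ℕ} (hk : 5 ≤ k) :
    breakpoint tower split (k + 1) ^ 2 ≤ breakpoint tower split (k + 2) := by
  obtain ⟨j, rfl⟩ : ∃ j, k = j + 1 := ⟨k - 1, by omega⟩
  rw [h.breakpoint_add_two (by omega), h.breakpoint_add_two (by omega), ← pow_mul]
  exact Nat.pow_le_pow_right two_pos (by linarith [h.two_mul_breakpoint_le (by omega : 4 ≤ j)])

lemma le_breakpoint (h : IsTowerSplit tower split) {k : ℕ} (hk : 4 ≤ k) :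
    k ≤ breakpoint tower split k := by
  induction k, hk using Nat.le_induction with
  | base => rw [h.breakpoint_four]
  | succ k hk ih => linarith [h.two_mul_breakpoint_le hk]

lemma tendsto_breakpoint (h : IsTowerSplit tower split) :
    Tendsto (fun k ↦ (breakpoint tower split k : ℝ)) atTop atTop :=
  tendsto_atTop_mono' _
    (eventually_atTop.2 ⟨4, fun _ hk ↦ Nat.cast_le.2 (h.le_breakpoint hk)⟩)
    tendsto_natCast_atTop_atTop

lemma two_rpow_mem_Ioc (h : IsTowerSplit tower split) {k : ℕ} (hk : 2 ≤ k) {x : ℝ}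
    (hx : x ∈ Ioc (breakpoint tower split k : ℝ) (breakpoint tower split (k + 1))) :
    (2 : ℝ) ^ x ∈
      Ioc (breakpoint tower split (k + 2) : ℝ) (breakpoint tower split (k + 3)) := by
  rw [h.breakpoint_add_two hk, h.breakpoint_add_two (by omega : 2 ≤ k + 1)]
  push_cast
  rw [← Real.rpow_natCast, ← Real.rpow_natCast]
  exact ⟨Real.rpow_lt_rpow_of_exponent_lt one_lt_two hx.1,
    Real.rpow_le_rpow_of_exponent_le one_le_two hx.2⟩

lemma sq_mem_Ioc (h : IsTowerSplit tower split) {k : ℕ} (hk : 5 ≤ k) {x : ℝ}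
    (hx : x ∈ Ioc (breakpoint tower split k : ℝ) (breakpoint tower split (k + 1))) :
    x ^ 2 ∈ Ioc (breakpoint tower split k : ℝ) (breakpoint tower split (k + 2)) := by
  have hx1 : 1 ≤ x := le_trans (by exact_mod_cast h.one_le_breakpoint (by omega)) hx.1.le
  refine ⟨hx.1.trans_le (le_self_pow₀ hx1 two_ne_zero), ?_⟩
  calc x ^ 2 ≤ (breakpoint tower split (k + 1) : ℝ) ^ 2 := by gcongr; exact hx.2
    _ ≤ (breakpoint tower split (k + 2) : ℝ) := by exact_mod_cast h.sq_breakpoint_succ_le hk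

end IsTowerSplit

lemma logStar_eq_of_mem_Ioc {logStar : ℝ → ℝ}
    (hfirst : ∀ t : ℕ, 1 ≤ t → ∀ x : ℝ,
      (tower (t - 1) : ℝ) < x → x ≤ (split t : ℝ) → logStar x = (t : ℝ))
    (hsecond : ∀ t : ℕ, 1 ≤ t → ∀ x : ℝ,
      (split t : ℝ) < x → x ≤ (tower t : ℝ) → logStar x = (t : ℝ) + 1 / 2)
    {k : ℕ} {x : ℝ}
    (hx : x ∈ Ioc (breakpoint tower split k : ℝ) (breakpoint tower split (k + 1))) :
    logStar x = (k + 2) / 2 := by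
  obtain ⟨t, rfl | rfl⟩ := Nat.even_or_odd' k
  · rw [breakpoint_two_mul, breakpoint_two_mul_add_one] at hx
    rw [hfirst (t + 1) le_add_self x (by simpa using hx.1) hx.2]
    push_cast; ring
  · rw [show 2 * t + 1 + 1 = 2 * (t + 1) by ring, breakpoint_two_mul,
      breakpoint_two_mul_add_one] at hx
    rw [hsecond (t + 1) le_add_self x hx.1 hx.2]
    push_cast; ring

lemma logStar_le_of_mem_Ioc {logStar : ℝ → ℝ}
    (hfirst : ∀ t : ℕ, 1 ≤ t → ∀ x : ℝ,
      (tower (t - 1) : ℝ) < x → x ≤ (split t : ℝ) → logStar x = (t : ℝ))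
    (hsecond : ∀ t : ℕ, 1 ≤ t → ∀ x : ℝ,
      (split t : ℝ) < x → x ≤ (tower t : ℝ) → logStar x = (t : ℝ) + 1 / 2)
    {k : ℕ} {x : ℝ}
    (hx : x ∈ Ioc (breakpoint tower split k : ℝ) (breakpoint tower split (k + 2))) :
    logStar x ≤ (k + 3) / 2 := by
  by_cases hmid : x ≤ breakpoint tower split (k + 1)
  · rw [logStar_eq_of_mem_Ioc hfirst hsecond ⟨hx.1, hmid⟩]
    linarith
  · rw [logStar_eq_of_mem_Ioc hfirst hsecond ⟨not_le.1 hmid, hx.2⟩]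
    push_cast; linarith

end Breakpoint

theorem stmt10_general (tower split : ℕ → ℕ)
    (htower0 : tower 0 = 1)
    (htowerS : ∀ t : ℕ, tower (t + 1) = 2 ^ tower t)
    (hsplit2 : split 2 = 3)
    (hsplitS : ∀ t : ℕ, 2 ≤ t → split (t + 1) = 2 ^ split t)
    (logStar : ℝ → ℝ)
    (hfirst : ∀ t : ℕ, 1 ≤ t → ∀ x : ℝ,
      (tower (t - 1) : ℝ) < x → x ≤ (split t : ℝ) → logStar x = (t : ℝ))
    (hsecond : ∀ t : ℕ, 1 ≤ t → ∀ x : ℝ,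
      (split t : ℝ) < x → x ≤ (tower t : ℝ) → logStar x = (t : ℝ) + 1 / 2) :
    ∀ x : ℝ, 8 < x → logStar (x ^ 2) + 1 / 2 ≤ logStar ((2 : ℝ) ^ x) := by
  intro x hx
  have h : IsTowerSplit tower split := ⟨htower0, htowerS, hsplit2, hsplitS⟩
  have h5 : (breakpoint tower split 5 : ℝ) < x := by rw [h.breakpoint_five]; exact_mod_cast hx
  obtain ⟨k, hk, hxk⟩ := exists_mem_Ioc_of_tendsto_atTop h.tendsto_breakpoint h5
  have hexp := logStar_eq_of_mem_Ioc hfirst hsecond (h.two_rpow_mem_Ioc (by omega) hxk)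
  have hsq := logStar_le_of_mem_Ioc hfirst hsecond (h.sq_mem_Ioc hk hxk)
  rw [hexp]
  push_cast
  linarith

/-- For real `x > 8`, `log*(x²) + 1/2 ≤ log*(2^x)`, where `log*` is the modified
iterated binary logarithm taking half-integer values: with `tower t` the tower of
2s of height `t` and `split t` the splitting point of the interval
`(tower (t-1), tower t]` (obtained by replacing the topmost 2 of `tower (t-1)`
by a 3), we have `log* x = t` on `(tower (t-1), split t]` and `log* x = t + 1/2`
on `(split t, tower t]`. -/
theorem stmt10 (tower split : ℕ → ℕ)
    (htower0 : tower 0 = 1)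
    (htowerS : ∀ t : ℕ, tower (t + 1) = 2 ^ tower t)
    (hsplit1 : split 1 = 2)
    (hsplit2 : split 2 = 3)
    (hsplitS : ∀ t : ℕ, 2 ≤ t → split (t + 1) = 2 ^ split t)
    (logStar : ℝ → ℝ)
    (hfirst : ∀ t : ℕ, 1 ≤ t → ∀ x : ℝ,
      (tower (t - 1) : ℝ) < x → x ≤ (split t : ℝ) → logStar x = (t : ℝ))
    (hsecond : ∀ t : ℕ, 1 ≤ t → ∀ x : ℝ,
      (split t : ℝ) < x → x ≤ (tower t : ℝ) → logStar x = (t : ℝ) + 1 / 2) :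
    ∀ x : ℝ, 8 < x → logStar (x ^ 2) + 1 / 2 ≤ logStar ((2 : ℝ) ^ x) :=
  stmt10_general tower split htower0 htowerS hsplit2 hsplitS logStar hfirst hsecond
end

section
/- Let H be an ℓ-bounded set system on finite X, 0 < q, and suppose there is a family F with the property that every S ∈ H contains some member of F, F does not contain the empty set, and Σ_{F ∈ F} q^{|F|} ≤ 2/3. Suppose further that for every nonempty F ∈ F, the number of S ∈ H with F ⊆ S is less than (1/q)^{ℓ - |F|}. Then |H| < (2/3)·(1/q)^ℓ. -/
/-- Counting step: if every member of the `ℓ`-bounded family `H` contains a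
member of `F`, `∅ ∉ F`, `∑_{G ∈ F} q^{|G|} ≤ 2/3`, and for every `G ∈ F` the
number of `S ∈ H` with `G ⊆ S` is less than `(1/q)^{ℓ - |G|}`, then
`|H| < (2/3)·(1/q)^ℓ`. -/
theorem stmt14 {α : Type*} [DecidableEq α] (H : Finset (Finset α)) (ℓ : ℕ)
    (q : ℝ) (hq : 0 < q)
    (hb : ∀ S ∈ H, S.card ≤ ℓ)
    (F : Finset (Finset α)) (hF : ∅ ∉ F)
    (hcov : ∀ S ∈ H, ∃ G ∈ F, G ⊆ S)
    (hsum : ∑ G ∈ F, q ^ G.card ≤ 2 / 3)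
    (hcount : ∀ G ∈ F,
      ((H.filter fun S => G ⊆ S).card : ℝ) < (1 / q) ^ (ℓ - G.card)) :
    (H.card : ℝ) < (2 / 3) * (1 / q) ^ ℓ := by
  set F' : Finset (Finset α) := F.filter fun G => G.card ≤ ℓ with hF'
  rcases H.eq_empty_or_nonempty with hHe | hHne
  · simp [hHe]
    positivity
  -- F' is nonempty
  obtain ⟨S, hS⟩ := hHne
  obtain ⟨G0, hG0F, hG0S⟩ := hcov S hS
  have hG0 : G0 ∈ F' := by
    simp only [hF', Finset.mem_filter]
    exact ⟨hG0F, le_trans (Finset.card_le_card hG0S) (hb S hS)⟩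
  -- H ⊆ biUnion
  have hsub : H ⊆ F'.biUnion fun G => H.filter fun S => G ⊆ S := by
    intro T hT
    obtain ⟨G, hGF, hGT⟩ := hcov T hT
    refine Finset.mem_biUnion.2 ⟨G, ?_, Finset.mem_filter.2 ⟨hT, hGT⟩⟩
    simp only [hF', Finset.mem_filter]
    exact ⟨hGF, le_trans (Finset.card_le_card hGT) (hb T hT)⟩
  have h1 : (H.card : ℝ) ≤ ∑ G ∈ F', ((H.filter fun S => G ⊆ S).card : ℝ) := by
    have := le_trans (Finset.card_le_card hsub) (Finset.card_biUnion_le)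
    exact_mod_cast this
  have h2 : ∑ G ∈ F', ((H.filter fun S => G ⊆ S).card : ℝ)
      < ∑ G ∈ F', (1 / q) ^ (ℓ - G.card) := by
    refine Finset.sum_lt_sum_of_nonempty ⟨G0, hG0⟩ fun G hG => ?_
    exact hcount G (Finset.mem_filter.1 hG).1
  have h3 : ∑ G ∈ F', (1 / q) ^ (ℓ - G.card) ≤ (2 / 3) * (1 / q) ^ ℓ := by
    have heq : ∀ G ∈ F', (1 / q : ℝ) ^ (ℓ - G.card) = (1 / q) ^ ℓ * q ^ G.card := by
      intro G hG
      have hGl : G.card ≤ ℓ := (Finset.mem_filter.1 hG).2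
      have hne : q ^ G.card ≠ 0 := by positivity
      have key : q ^ ℓ = q ^ (ℓ - G.card) * q ^ G.card := by
        rw [← pow_add, Nat.sub_add_cancel hGl]
      rw [one_div, inv_pow, inv_pow, key, mul_inv, mul_assoc, inv_mul_cancel₀ hne, mul_one]
    calc ∑ G ∈ F', (1 / q : ℝ) ^ (ℓ - G.card)
        = ∑ G ∈ F', (1 / q) ^ ℓ * q ^ G.card := Finset.sum_congr rfl heq
      _ = (1 / q) ^ ℓ * ∑ G ∈ F', q ^ G.card := by rw [Finset.mul_sum]
      _ ≤ (1 / q) ^ ℓ * ∑ G ∈ F, q ^ G.card := by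
          apply mul_le_mul_of_nonneg_left _ (by positivity)
          exact Finset.sum_le_sum_of_subset_of_nonneg (Finset.filter_subset _ _)
            fun i _ _ => by positivity
      _ ≤ (1 / q) ^ ℓ * (2 / 3) := by
          apply mul_le_mul_of_nonneg_left hsum (by positivity)
      _ = (2 / 3) * (1 / q) ^ ℓ := by ring
  linarith
end
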